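/- In the Farey graph, every edge {p/q, r/s} (with |ps - qr| = 1) is contained in exactly two triangles, namely those with third vertex (p+r)/(q+s) and (p-r)/(q-s). -/

import Mathlib

/-!
Write `[a, b] = a 0 * b 1 - a 1 * b 0`. Cramer's rule in dimension two reads
`[v, w] • u = [u, w] • v - [u, v] • w`, so when `[v, w] = ±1` every `u` with `[u, v] = ±1` and
`[u, w] = ±1` is a signed combination `±v ± w`. Conversely `[v ± w, v]` and `[v ± w, w]` are
`±[v, w]`.
-/

namespace Farey

variable {R : Type*} [CommRing R]

def det2 (a b : Fin 2 → R) : R := a 0 * b 1 - a 1 * b 0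

theorem det2_smul_eq_sub (u v w : Fin 2 → R) :
    det2 v w • u = det2 u w • v - det2 u v • w := by
  funext i
  simp only [det2, Pi.smul_apply, Pi.sub_apply, smul_eq_mul]
  fin_cases i <;> simp <;> ring

theorem det2_self (a : Fin 2 → R) : det2 a a = 0 := by
  simp only [det2]; ring

theorem det2_swap (a b : Fin 2 → R) : det2 b a = -det2 a b := by
  simp only [det2]; ring

theorem det2_add_left (a b c : Fin 2 → R) : det2 (a + b) c = det2 a c + det2 b c := by
  simp only [det2, Pi.add_apply]; ring

theorem det2_sub_left (a b c : Fin 2 → R) : det2 (a - b) c = det2 a c - det2 b c := by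
  simp only [det2, Pi.sub_apply]; ring

theorem det2_neg_left (a b : Fin 2 → R) : det2 (-a) b = -det2 a b := by
  simp only [det2, Pi.neg_apply]; ring

theorem abs_det2_eq_one_of_mem_third_vertices {v w u : Fin 2 → ℤ} (hdet : |det2 v w| = 1)
    (hu : u = v + w ∨ u = -(v + w) ∨ u = v - w ∨ u = -(v - w)) :
    |det2 u v| = 1 ∧ |det2 u w| = 1 := by
  rcases hu with rfl | rfl | rfl | rfl <;>
    simp [det2_neg_left, det2_add_left, det2_sub_left, det2_self, det2_swap v w, hdet]

theorem mem_third_vertices_of_abs_det2_eq_one {v w u : Fin 2 → ℤ} (hdet : |det2 v w| = 1)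
    (huv : |det2 u v| = 1) (huw : |det2 u w| = 1) :
    u = v + w ∨ u = -(v + w) ∨ u = v - w ∨ u = -(v - w) := by
  have hd2 : det2 v w * det2 v w = 1 := by
    rw [← abs_mul_self, abs_mul, hdet, one_mul]
  have hu : u = det2 v w • (det2 u w • v - det2 u v • w) := by
    rw [← det2_smul_eq_sub, smul_smul, hd2, one_smul]
  rcases (abs_eq zero_le_one).1 hdet with hd | hd <;>
  rcases (abs_eq zero_le_one).1 huv with ha | ha <;>
  rcases (abs_eq zero_le_one).1 huw with hb | hb <;>
  rw [hd, ha, hb] at hu <;> rw [hu] <;>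
  first
    | (left; abel1)
    | (right; left; abel1)
    | (right; right; left; abel1)
    | (right; right; right; abel1)

end Farey

open Farey

theorem farey_edge_in_exactly_two_triangles_general
    (v w : Fin 2 → ℤ)
    (hdet : |v 0 * w 1 - v 1 * w 0| = 1) :
    ∀ u : Fin 2 → ℤ, IsCoprime (u 0) (u 1) →
      ((|u 0 * v 1 - u 1 * v 0| = 1 ∧ |u 0 * w 1 - u 1 * w 0| = 1) ↔
        (u = v + w ∨ u = -(v + w) ∨ u = v - w ∨ u = -(v - w))) :=
  fun _ _ => ⟨fun h => mem_third_vertices_of_abs_det2_eq_one hdet h.1 h.2,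
    abs_det2_eq_one_of_mem_third_vertices hdet⟩

/-- In the Farey graph, every edge is contained in exactly two triangles: given
primitive vectors `v, w` with `|det(v w)| = 1`, the primitive vectors `u` with
`|det(u v)| = 1` and `|det(u w)| = 1` are exactly `±(v + w)` and `±(v - w)`. -/
theorem farey_edge_in_exactly_two_triangles
    (v w : Fin 2 → ℤ) (hv : IsCoprime (v 0) (v 1)) (hw : IsCoprime (w 0) (w 1))
    (hdet : |v 0 * w 1 - v 1 * w 0| = 1) :
    ∀ u : Fin 2 → ℤ, IsCoprime (u 0) (u 1) →
      ((|u 0 * v 1 - u 1 * v 0| = 1 ∧ |u 0 * w 1 - u 1 * w 0| = 1) ↔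
        (u = v + w ∨ u = -(v + w) ∨ u = v - w ∨ u = -(v - w))) :=
  farey_edge_in_exactly_two_triangles_general v w hdet
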